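/- arXiv:2509.19293 — 2 statements merged into one kernel-verified Lean document; each statement's English description precedes it below -/
import Mathlib

section
/- Let V = EuclideanSpace ℝ (Fin n), Ω ⊆ V a nonempty proper open convex cone, ψ the dual map of Ω, H ⊆ V a linear subspace, and C_H := {ω ∈ Ω : ψ(ω) ∈ H^⊥}. Then for every ω ∈ C_H one has (ω + H) ∩ C_H = {ω}; that is, if h ∈ H satisfies ω + h ∈ Ω and ψ(ω + h) ∈ H^⊥, then h = 0. -/
open Set Filter
open scoped Pointwise RealInnerProductSpace

/-- A subset `C` of a real vector space is a cone if `t • x ∈ C` for all `x ∈ C`, `t > 0`. -/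
def IsCone {V : Type*} [AddCommGroup V] [Module ℝ V] (C : Set V) : Prop :=
  ∀ x ∈ C, ∀ t : ℝ, 0 < t → t • x ∈ C

/-- The open dual cone of an open cone `Ω` with respect to the inner product. -/
def openDualCone {V : Type*} [NormedAddCommGroup V] [InnerProductSpace ℝ V] (Ω : Set V) :
    Set V :=
  {v | ∀ ω ∈ closure Ω, ω ≠ 0 → 0 < ⟪v, ω⟫}

open MeasureTheory

/-- The characteristic function of a proper open convex cone `Ω ⊆ EuclideanSpace ℝ (Fin n)`:
`φ(ω) = ∫_{Ω*} exp (−⟪ω, y⟫) dy`, the integral over the open dual cone with respect to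
Lebesgue measure. -/
noncomputable def charFun {n : ℕ} (Ω : Set (EuclideanSpace ℝ (Fin n)))
    (ω : EuclideanSpace ℝ (Fin n)) : ℝ :=
  ∫ y in openDualCone Ω, Real.exp (-⟪ω, y⟫)

/-- The dual map `ψ(ω) = ω* := −∇(log φ)(ω)` of a cone `Ω`, where `φ` is its characteristic
function and the gradient is taken with respect to the inner product. -/
noncomputable def dualMap {n : ℕ} (Ω : Set (EuclideanSpace ℝ (Fin n)))
    (ω : EuclideanSpace ℝ (Fin n)) : EuclideanSpace ℝ (Fin n) :=
  -gradient (fun x => Real.log (charFun Ω x)) ω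

/-! The integral `G x = ∫_{Ω*} e^{-⟪x, y⟫} y dy` equals `φ x • ψ x`, so `ψ ω, ψ (ω + h) ∈ Hᗮ` with
`h ∈ H` forces `⟪h, G ω⟫ = ⟪h, G (ω + h)⟫ = 0`. On the other hand
`⟪h, G ω - G (ω + h)⟫ = ∫_{Ω*} ⟪h, y⟫ (e^{-⟪ω, y⟫} - e^{-⟪ω, y⟫ - ⟪h, y⟫}) dy`, whose integrand is
nonnegative and vanishes only on the hyperplane `⟪h, y⟫ = 0`. Properness of `Ω` gives `Ω*` nonempty
interior (by the bipolar theorem), so this integral is positive unless `h = 0`. -/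

open Metric MeasureTheory ProperCone Topology

section DualCone

variable {V : Type*} [NormedAddCommGroup V] [InnerProductSpace ℝ V] {Ω : Set V}

theorem IsCone.zero_mem_closure (hcone : IsCone Ω) (hne : Ω.Nonempty) : (0 : V) ∈ closure Ω := by
  obtain ⟨x, hx⟩ := hne
  have hlim : Tendsto (fun t : ℝ => t • x) (𝓝[>] 0) (𝓝 0) := by
    simpa using ((tendsto_id (x := 𝓝 (0 : ℝ))).smul_const x).mono_left nhdsWithin_le_nhds
  exact mem_closure_of_tendsto hlim (eventually_nhdsWithin_of_forall fun t ht => hcone x hx t ht)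

def IsCone.toConvexCone (hcone : IsCone Ω) (hconv : Convex ℝ Ω) : ConvexCone ℝ V where
  carrier := Ω
  smul_mem' c hc x hx := hcone x hx c hc
  add_mem' x hx y hy := by
    have half : (0 : ℝ) ≤ 1 / 2 := by norm_num
    have := hcone _ (hconv hx hy half half (by norm_num)) 2 two_pos
    rwa [smul_add, smul_smul, smul_smul, show (2 : ℝ) * (1 / 2) = 1 by norm_num, one_smul,
      one_smul] at this

noncomputable def IsCone.closureProperCone (hcone : IsCone Ω) (hconv : Convex ℝ Ω)
    (hne : Ω.Nonempty) : ProperCone ℝ V :=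
  ⟨((IsCone.toConvexCone hcone hconv).closure).toPointedCone (IsCone.zero_mem_closure hcone hne),
    isClosed_closure⟩

theorem IsCone.innerDual_innerDual_closure [CompleteSpace V] (hcone : IsCone Ω)
    (hconv : Convex ℝ Ω) (hne : Ω.Nonempty) :
    (innerDual (innerDual (closure Ω) : Set V) : Set V) = closure Ω :=
  congrArg SetLike.coe (innerDual_innerDual (IsCone.closureProperCone hcone hconv hne))

theorem Convex.exists_ne_zero_forall_inner_eq_zero [FiniteDimensional ℝ V] {s : Set V}
    (hs : Convex ℝ s) (h0 : (0 : V) ∈ s) (hint : interior s = ∅) :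
    ∃ u ≠ 0, ∀ d ∈ s, ⟪d, u⟫ = 0 := by
  have hspan : vectorSpan ℝ s ≠ ⊤ := by
    rw [Ne, ← AffineSubspace.affineSpan_eq_top_iff_vectorSpan_eq_top_of_nonempty ℝ V V ⟨0, h0⟩,
      ← hs.interior_nonempty_iff_affineSpan_eq_top, hint]
    exact Set.not_nonempty_empty
  obtain ⟨u, hu, hu0⟩ := Submodule.exists_mem_ne_zero_of_ne_bot
    (mt Submodule.orthogonal_eq_bot_iff.1 hspan)
  refine ⟨u, hu0, fun d hd => Submodule.inner_right_of_mem_orthogonal ?_ hu⟩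
  simpa using vsub_mem_vectorSpan ℝ hd h0

theorem mul_norm_le_inner_of_forall_closedBall {a y : V} {r : ℝ} (hr : 0 ≤ r)
    (h : ∀ z ∈ closedBall a r, 0 ≤ ⟪z, y⟫) : r * ‖y‖ ≤ ⟪a, y⟫ := by
  rcases eq_or_ne y 0 with rfl | hy
  · simp
  have hz : a - (r / ‖y‖) • y ∈ closedBall a r := by
    rw [mem_closedBall, dist_eq_norm, sub_sub_cancel_left, norm_neg, norm_smul, Real.norm_eq_abs,
      abs_of_nonneg (by positivity), div_mul_cancel₀ _ (norm_ne_zero_iff.2 hy)]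
  have := h _ hz
  rw [inner_sub_left, real_inner_smul_left, real_inner_self_eq_norm_sq] at this
  have hy' : 0 < ‖y‖ := norm_pos_iff.2 hy
  calc r * ‖y‖ = r / ‖y‖ * ‖y‖ ^ 2 := by field_simp
    _ ≤ ⟪a, y⟫ := by linarith

theorem inner_nonneg_of_mem_openDualCone {v ω : V} (hv : v ∈ openDualCone Ω)
    (hω : ω ∈ closure Ω) : 0 ≤ ⟪v, ω⟫ := by
  rcases eq_or_ne ω 0 with rfl | hω0
  · simp
  · exact (hv ω hω hω0).le

theorem interior_innerDual_subset_openDualCone [CompleteSpace V] :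
    interior (innerDual (closure Ω) : Set V) ⊆ openDualCone Ω := by
  intro v hv ω hω hω0
  obtain ⟨r, hr, hball⟩ := nhds_basis_closedBall.mem_iff.1 (mem_interior_iff_mem_nhds.1 hv)
  have := mul_norm_le_inner_of_forall_closedBall (y := ω) hr.le fun z hz => by
    simpa [real_inner_comm] using hball hz hω
  have : 0 < r * ‖ω‖ := mul_pos hr (norm_pos_iff.2 hω0)
  linarith

theorem interior_openDualCone_nonempty [FiniteDimensional ℝ V] (hne : Ω.Nonempty)
    (hconv : Convex ℝ Ω) (hcone : IsCone Ω) (hproper : closure Ω ∩ -closure Ω = {0}) :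
    (interior (openDualCone Ω)).Nonempty := by
  have := FiniteDimensional.complete ℝ V
  refine .mono (interior_maximal interior_innerDual_subset_openDualCone isOpen_interior) ?_
  by_contra! hint
  obtain ⟨u, hu0, hu⟩ := (innerDual (closure Ω)).convex.exists_ne_zero_forall_inner_eq_zero
    (innerDual (closure Ω)).zero_mem hint
  have hmem : ∀ w, (∀ d ∈ (innerDual (closure Ω) : Set V), ⟪d, w⟫ = 0) → w ∈ closure Ω := by
    intro w hw
    rw [← IsCone.innerDual_innerDual_closure hcone hconv hne]
    exact fun d hd => (hw d hd).ge
  have : u ∈ closure Ω ∩ -closure Ω :=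
    ⟨hmem u hu, hmem (-u) fun d hd => by rw [inner_neg_right, hu d hd, neg_zero]⟩
  exact hu0 (by rwa [hproper] at this)

theorem convex_openDualCone : Convex ℝ (openDualCone Ω) := by
  intro v hv w hw a b ha hb hab ω hω hω0
  rw [inner_add_left, real_inner_smul_left, real_inner_smul_left]
  rcases ha.lt_or_eq with ha | rfl
  · have := hw ω hω hω0
    nlinarith [hv ω hω hω0]
  · rw [zero_add] at hab
    simpa [hab] using hw ω hω hω0

theorem exists_forall_ball_mul_norm_le_inner (hopen : IsOpen Ω) {x : V} (hx : x ∈ Ω) :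
    ∃ δ > 0, ∀ x' ∈ ball x δ, ∀ y ∈ openDualCone Ω, δ * ‖y‖ ≤ ⟪x', y⟫ := by
  obtain ⟨ε, hε, hball⟩ := nhds_basis_closedBall.mem_iff.1 (hopen.mem_nhds hx)
  refine ⟨ε / 2, by positivity, fun x' hx' y hy => ?_⟩
  refine mul_norm_le_inner_of_forall_closedBall (by positivity) fun z hz => ?_
  have hzΩ : z ∈ Ω := hball <| by
    have := dist_triangle z x' x
    rw [mem_closedBall] at hz ⊢; rw [mem_ball] at hx'; linarith
  rw [real_inner_comm]
  exact inner_nonneg_of_mem_openDualCone hy (subset_closure hzΩ)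

theorem measure_openDualCone_pos [FiniteDimensional ℝ V] [MeasurableSpace V] (μ : Measure V)
    [μ.IsOpenPosMeasure] (hconv : Convex ℝ Ω) (hcone : IsCone Ω)
    (hproper : closure Ω ∩ -closure Ω = {0}) {x : V} (hx : x ∈ Ω) : 0 < μ (openDualCone Ω) :=
  Measure.measure_pos_of_nonempty_interior μ
    (interior_openDualCone_nonempty ⟨x, hx⟩ hconv hcone hproper)

end DualCone

theorem hasGradientAt_exp_neg_inner {V : Type*} [NormedAddCommGroup V] [InnerProductSpace ℝ V]
    [CompleteSpace V] (x y : V) :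
    HasGradientAt (fun x => Real.exp (-⟪x, y⟫)) (-(Real.exp (-⟪x, y⟫) • y)) x := by
  have hinner : HasFDerivAt (fun x => -⟪x, y⟫) (-innerSL ℝ y) x := by
    simpa only [innerSL_apply_apply, real_inner_comm y] using (innerSL ℝ y).hasFDerivAt.fun_neg
  rw [hasGradientAt_iff_hasFDerivAt]
  refine hinner.exp.congr_fderiv ?_
  ext v
  simp

theorem mul_exp_sub_exp_sub_pos {a : ℝ} (b : ℝ) (ha : a ≠ 0) :
    0 < a * (Real.exp b - Real.exp (b - a)) := by
  rcases ha.lt_or_gt with ha | ha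
  · exact mul_pos_of_neg_of_neg ha (sub_neg.2 (Real.exp_lt_exp.2 (by linarith)))
  · exact mul_pos ha (sub_pos.2 (Real.exp_lt_exp.2 (by linarith)))

theorem integrable_norm_pow_mul_exp_neg_mul_norm {E : Type*} [NormedAddCommGroup E]
    [NormedSpace ℝ E] [FiniteDimensional ℝ E] [MeasurableSpace E] [BorelSpace E] (μ : Measure E)
    [μ.IsAddHaarMeasure] {δ : ℝ} (hδ : 0 < δ) (k : ℕ) :
    Integrable (fun y : E => ‖y‖ ^ k * Real.exp (-(δ * ‖y‖))) μ := by
  rcases subsingleton_or_nontrivial E with _ | _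
  · exact Integrable.of_finite
  rw [integrable_fun_norm_addHaar μ (f := fun t => t ^ k * Real.exp (-(δ * t)))]
  refine (integrableOn_rpow_mul_exp_neg_mul_rpow (s := (Module.finrank ℝ E - 1 + k : ℕ))
    (neg_one_lt_zero.trans_le (Nat.cast_nonneg _)) one_pos hδ).congr_fun (fun t _ => ?_)
    measurableSet_Ioi
  simp only [Real.rpow_natCast, Real.rpow_one, pow_add, smul_eq_mul]
  ring_nf

section AddHaar

variable {V : Type*} [NormedAddCommGroup V] [InnerProductSpace ℝ V] [FiniteDimensional ℝ V]
  [MeasurableSpace V] [BorelSpace V] (μ : Measure V) [μ.IsAddHaarMeasure] {Ω : Set V} {x : V}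

theorem integrableOn_norm_pow_mul_exp_neg_inner (hopen : IsOpen Ω) (hx : x ∈ Ω) (k : ℕ) :
    IntegrableOn (fun y => ‖y‖ ^ k * Real.exp (-⟪x, y⟫)) (openDualCone Ω) μ := by
  obtain ⟨δ, hδ, hle⟩ := exists_forall_ball_mul_norm_le_inner hopen hx
  refine (integrable_norm_pow_mul_exp_neg_mul_norm μ hδ k).integrableOn.mono' (by fun_prop) ?_
  filter_upwards [ae_restrict_mem₀ (convex_openDualCone.nullMeasurableSet μ)] with y hy
  rw [Real.norm_of_nonneg (by positivity)]
  gcongr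
  linarith [hle x (mem_ball_self hδ) y hy]

theorem integrableOn_exp_neg_inner_smul (hopen : IsOpen Ω) (hx : x ∈ Ω) :
    IntegrableOn (fun y => Real.exp (-⟪x, y⟫) • y) (openDualCone Ω) μ :=
  (integrableOn_norm_pow_mul_exp_neg_inner μ hopen hx 1).mono' (by fun_prop) <|
    .of_forall fun y => by simp [norm_smul, mul_comm]

theorem restrict_setOf_inner_ne_zero {h : V} (h0 : h ≠ 0) (s : Set V) :
    μ.restrict s {y | ⟪h, y⟫ ≠ 0} = μ s := by
  set K := LinearMap.ker (innerₛₗ ℝ h)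
  have hK : μ K = 0 := Measure.addHaar_submodule μ K fun hK => h0 <| by
    simpa using (LinearMap.mem_ker.1 (hK ▸ Submodule.mem_top : h ∈ K))
  have hcompl : {y | ⟪h, y⟫ ≠ 0} = (K : Set V)ᶜ := by ext; simp [K]
  rw [hcompl]
  refine (measure_congr (ae_eq_univ.2 ?_)).trans (Measure.restrict_apply_univ s)
  rw [compl_compl]
  exact nonpos_iff_eq_zero.1 ((Measure.restrict_apply_le s _).trans_eq hK)

theorem inner_integral_exp_neg_inner_smul_sub_pos {s : Set V} (hs : μ s ≠ 0) {x h : V}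
    (hx : IntegrableOn (fun y => Real.exp (-⟪x, y⟫) • y) s μ)
    (hxh : IntegrableOn (fun y => Real.exp (-⟪x + h, y⟫) • y) s μ) (h0 : h ≠ 0) :
    0 < ⟪h, (∫ y in s, Real.exp (-⟪x, y⟫) • y ∂μ) - ∫ y in s, Real.exp (-⟪x + h, y⟫) • y ∂μ⟫ := by
  set f : V → ℝ := fun y => ⟪h, y⟫ * (Real.exp (-⟪x, y⟫) - Real.exp (-⟪x, y⟫ - ⟪h, y⟫))
  have hf : (fun y => ⟪h, Real.exp (-⟪x, y⟫) • y - Real.exp (-⟪x + h, y⟫) • y⟫) = f := by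
    ext y
    simp only [f, inner_sub_right, real_inner_smul_right, inner_add_left, neg_add]
    ring_nf
  have hfpos : ∀ y, ⟪h, y⟫ ≠ 0 → 0 < f y := fun y hy => mul_exp_sub_exp_sub_pos _ hy
  have hsupp : Function.support f = {y | ⟪h, y⟫ ≠ 0} := by
    ext y
    refine ⟨fun hy hzero => hy (by simp [f, hzero]), fun hy => (hfpos y hy).ne'⟩
  have hf0 : 0 ≤ f := fun y => by
    by_cases hy : ⟪h, y⟫ = 0
    · simp [f, hy]
    · exact (hfpos y hy).le
  have hfint : IntegrableOn f s μ := hf ▸ (hx.sub' hxh).const_inner h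
  rw [← integral_sub hx hxh, ← integral_inner (hx.sub' hxh), hf,
    integral_pos_iff_support_of_nonneg hf0 hfint, hsupp, restrict_setOf_inner_ne_zero μ h0]
  exact pos_iff_ne_zero.2 hs

end AddHaar

section CharFun

variable {n : ℕ} {Ω : Set (EuclideanSpace ℝ (Fin n))} {x : EuclideanSpace ℝ (Fin n)}

theorem hasGradientAt_charFun (hopen : IsOpen Ω) (hx : x ∈ Ω) :
    HasGradientAt (charFun Ω) (-∫ y in openDualCone Ω, Real.exp (-⟪x, y⟫) • y) x := by
  obtain ⟨δ, hδ, hle⟩ := exists_forall_ball_mul_norm_le_inner hopen hx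
  have hcomm := LinearIsometry.integral_comp_comm (μ := volume.restrict (openDualCone Ω))
    (InnerProductSpace.toDual ℝ _).toLinearIsometry fun y => -(Real.exp (-⟪x, y⟫) • y)
  rw [LinearIsometryEquiv.coe_toLinearIsometry] at hcomm
  rw [hasGradientAt_iff_hasFDerivAt, ← integral_neg, ← hcomm]
  refine hasFDerivAt_integral_of_dominated_of_fderiv_le (F := fun x y => Real.exp (-⟪x, y⟫))
    (bound := fun y => ‖y‖ ^ 1 * Real.exp (-(δ * ‖y‖))) (ball_mem_nhds x hδ)
    (.of_forall fun _ => by fun_prop)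
    (by simpa using (integrableOn_norm_pow_mul_exp_neg_inner volume hopen hx 0).integrable)
    (by fun_prop) ?_
    (integrable_norm_pow_mul_exp_neg_mul_norm volume hδ 1).integrableOn
    (.of_forall fun y x' _ => hasGradientAt_exp_neg_inner x' y)
  filter_upwards [ae_restrict_mem₀ (convex_openDualCone.nullMeasurableSet volume)] with y hy x' hx'
  rw [LinearIsometryEquiv.norm_map, norm_neg, norm_smul, Real.norm_of_nonneg (Real.exp_pos _).le,
    mul_comm, pow_one]
  gcongr
  linarith [hle x' hx' y hy]

theorem charFun_pos (hopen : IsOpen Ω) (hconv : Convex ℝ Ω) (hcone : IsCone Ω)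
    (hproper : closure Ω ∩ -closure Ω = {0}) (hx : x ∈ Ω) : 0 < charFun Ω x := by
  have hint := (integrableOn_norm_pow_mul_exp_neg_inner volume hopen hx 0).integrable
  simp only [pow_zero, one_mul] at hint
  change 0 < ∫ y in openDualCone Ω, Real.exp (-⟪x, y⟫)
  rw [setIntegral_pos_iff_support_of_nonneg_ae (.of_forall fun y => (Real.exp_pos _).le)
    hint]
  simpa [Function.support, Real.exp_ne_zero] using
    measure_openDualCone_pos volume hconv hcone hproper hx

theorem charFun_smul_dualMap (hopen : IsOpen Ω) (hconv : Convex ℝ Ω) (hcone : IsCone Ω)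
    (hproper : closure Ω ∩ -closure Ω = {0}) (hx : x ∈ Ω) :
    charFun Ω x • dualMap Ω x = ∫ y in openDualCone Ω, Real.exp (-⟪x, y⟫) • y := by
  have hpos := charFun_pos hopen hconv hcone hproper hx
  rw [dualMap, ((hasGradientAt_charFun hopen hx).hasFDerivAt.log hpos.ne').hasGradientAt.gradient]
  simp [smul_smul, hpos.ne']

theorem eq_zero_of_dualMap_mem_orthogonal (hopen : IsOpen Ω) (hconv : Convex ℝ Ω)
    (hcone : IsCone Ω) (hproper : closure Ω ∩ -closure Ω = {0})
    {H : Submodule ℝ (EuclideanSpace ℝ (Fin n))} {h : EuclideanSpace ℝ (Fin n)} (hh : h ∈ H)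
    (hx : x ∈ Ω) (hψx : dualMap Ω x ∈ Hᗮ) (hxh : x + h ∈ Ω) (hψxh : dualMap Ω (x + h) ∈ Hᗮ) :
    h = 0 := by
  by_contra h0
  have hpos := inner_integral_exp_neg_inner_smul_sub_pos volume
    (measure_openDualCone_pos volume hconv hcone hproper hx).ne'
    (integrableOn_exp_neg_inner_smul volume hopen hx)
    (integrableOn_exp_neg_inner_smul volume hopen hxh) h0
  rw [← charFun_smul_dualMap hopen hconv hcone hproper hx,
    ← charFun_smul_dualMap hopen hconv hcone hproper hxh, inner_sub_right,
    real_inner_smul_right, real_inner_smul_right, (H.mem_orthogonal _).1 hψx h hh,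
    (H.mem_orthogonal _).1 hψxh h hh] at hpos
  simp at hpos

end CharFun

theorem stmt_9_general {n : ℕ} (Ω : Set (EuclideanSpace ℝ (Fin n)))
    (hopen : IsOpen Ω) (hconv : Convex ℝ Ω)
    (hcone : IsCone Ω) (hproper : closure Ω ∩ -closure Ω = {0})
    (H : Submodule ℝ (EuclideanSpace ℝ (Fin n)))
    (C_H : Set (EuclideanSpace ℝ (Fin n)))
    (hC_H : C_H = {ω ∈ Ω | dualMap Ω ω ∈ Hᗮ})
    (ω : EuclideanSpace ℝ (Fin n)) (hω : ω ∈ C_H) :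
    ({x | ∃ h ∈ H, x = ω + h} ∩ C_H = {ω}) ∧
      ∀ h ∈ H, ω + h ∈ Ω → dualMap Ω (ω + h) ∈ Hᗮ → h = 0 := by
  rw [hC_H] at hω ⊢
  have key : ∀ h ∈ H, ω + h ∈ Ω → dualMap Ω (ω + h) ∈ Hᗮ → h = 0 := fun h hh hωh hψωh =>
    eq_zero_of_dualMap_mem_orthogonal hopen hconv hcone hproper hh hω.1 hω.2 hωh hψωh
  refine ⟨Set.eq_singleton_iff_unique_mem.2 ⟨⟨⟨0, H.zero_mem, (add_zero ω).symm⟩, hω⟩, ?_⟩, key⟩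
  rintro _ ⟨⟨h, hh, rfl⟩, hωh, hψωh⟩
  rw [key h hh hωh hψωh, add_zero]

theorem stmt_9 {n : ℕ} (Ω : Set (EuclideanSpace ℝ (Fin n)))
    (hne : Ω.Nonempty) (hopen : IsOpen Ω) (hconv : Convex ℝ Ω)
    (hcone : IsCone Ω) (hproper : closure Ω ∩ -closure Ω = {0})
    (H : Submodule ℝ (EuclideanSpace ℝ (Fin n)))
    (C_H : Set (EuclideanSpace ℝ (Fin n)))
    (hC_H : C_H = {ω ∈ Ω | dualMap Ω ω ∈ Hᗮ})
    (ω : EuclideanSpace ℝ (Fin n)) (hω : ω ∈ C_H) :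
    ({x | ∃ h ∈ H, x = ω + h} ∩ C_H = {ω}) ∧
      ∀ h ∈ H, ω + h ∈ Ω → dualMap Ω (ω + h) ∈ Hᗮ → h = 0 :=
  stmt_9_general Ω hopen hconv hcone hproper H C_H hC_H ω hω
end

section
/- Let V be a finite-dimensional real inner product space, Ω ⊆ V a nonempty proper open convex cone which is homogeneous, and H ⊆ V a linear subspace with H ∩ closure(Ω) = {0}. Then H^⊥ ∩ (Ω + H) is a nonempty proper open convex cone in the subspace H^⊥: it is open in H^⊥, convex, closed under multiplication by positive scalars, and its closure C satisfies C ∩ (−C) = {0}. Consequently S := H^⊥ + i(H^⊥ ∩ (Ω + H)) is a Siegel domain of genus 1 in (H^⊥)^ℂ. -/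
open Set Filter
open scoped Pointwise RealInnerProductSpace

/-! The orthogonal projection `P` onto `Hᗮ` maps `Ω` onto `Hᗮ ∩ (Ω + H)`, so openness, convexity
and the cone property are inherited. Since the kernel `H` of `P` meets the closed cone `closure Ω`
only in `0`, compactness of the unit sphere bounds `‖P x‖` below by `c ‖x‖` on `closure Ω`; hence
`P (closure Ω)` is closed and contains the closure of the image. If `P a = -P b` with
`a, b ∈ closure Ω`, then `a + b ∈ H ∩ closure Ω = {0}`, and properness of `Ω` forces `a = 0`. -/

open Topology

namespace IsCone

section Module

variable {E F : Type*} [AddCommGroup E] [Module ℝ E] [AddCommGroup F] [Module ℝ F] {C : Set E}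

theorem image (hC : IsCone C) (f : E →ₗ[ℝ] F) : IsCone (f '' C) := by
  rintro _ ⟨x, hx, rfl⟩ t ht
  exact ⟨t • x, hC x hx t ht, map_smul f t x⟩

theorem add_mem (hC : IsCone C) (hconv : Convex ℝ C) {x y : E} (hx : x ∈ C) (hy : y ∈ C) :
    x + y ∈ C := by
  have hmid : (2⁻¹ : ℝ) • x + (2⁻¹ : ℝ) • y ∈ C :=
    hconv hx hy (by norm_num) (by norm_num) (by norm_num)
  convert hC _ hmid 2 two_pos using 1
  rw [smul_add, smul_inv_smul₀ two_ne_zero, smul_inv_smul₀ two_ne_zero]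

end Module

section Topology

variable {E : Type*} [AddCommGroup E] [Module ℝ E] [TopologicalSpace E] {C : Set E}

protected theorem closure [ContinuousConstSMul ℝ E] (hC : IsCone C) :
    IsCone (closure C) :=
  fun _ hx t ht => map_mem_closure (continuous_const_smul t) hx fun y hy => hC y hy t ht

theorem zero_mem_closure_s12 [ContinuousSMul ℝ E] (hC : IsCone C) (hne : C.Nonempty) :
    (0 : E) ∈ closure C := by
  obtain ⟨x, hx⟩ := hne
  have hlim : Tendsto (fun t : ℝ => t • x) (𝓝[>] 0) (𝓝 0) := by
    simpa using ((tendsto_id (x := 𝓝 (0 : ℝ))).smul_const x).mono_left nhdsWithin_le_nhds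
  exact mem_closure_of_tendsto hlim
    (eventually_nhdsWithin_of_forall fun t (ht : 0 < t) => hC x hx t ht)

end Topology

section Normed

variable {E F : Type*} [NormedAddCommGroup E] [NormedSpace ℝ E] [FiniteDimensional ℝ E]
  [NormedAddCommGroup F] [NormedSpace ℝ F] {K : Set E}

theorem exists_pos_mul_norm_le_norm_apply (hK : IsCone K) (hKc : IsClosed K) (f : E →L[ℝ] F)
    (hf : ∀ x ∈ K, f x = 0 → x = 0) : ∃ c > 0, ∀ x ∈ K, c * ‖x‖ ≤ ‖f x‖ := by
  have hS : IsCompact (K ∩ Metric.sphere 0 1) :=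
    (isCompact_sphere 0 1).of_isClosed_subset (hKc.inter Metric.isClosed_sphere)
      inter_subset_right
  obtain ⟨c, hc, hcS⟩ := hS.exists_forall_le' (f := fun x => ‖f x‖)
    f.continuous.norm.continuousOn (a := 0) fun x ⟨hxK, hx1⟩ =>
      norm_pos_iff.2 fun h => by simp [hf x hxK h] at hx1
  refine ⟨c, hc, fun x hx => ?_⟩
  rcases eq_or_ne x 0 with rfl | hx0
  · simp
  have hnx : 0 < ‖x‖ := norm_pos_iff.2 hx0
  have hunit := hcS (‖x‖⁻¹ • x) ⟨hK x hx _ (inv_pos.2 hnx), by simp [norm_smul, hnx.ne']⟩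
  rw [map_smul, norm_smul, norm_inv, norm_norm, inv_mul_eq_div, le_div_iff₀ hnx] at hunit
  exact hunit

theorem isClosed_image (hK : IsCone K) (hKc : IsClosed K) (f : E →L[ℝ] F)
    (hf : ∀ x ∈ K, f x = 0 → x = 0) : IsClosed (f '' K) := by
  obtain ⟨c, hc, hcK⟩ := hK.exists_pos_mul_norm_le_norm_apply hKc f hf
  refine isClosed_of_closure_subset fun y hy => ?_
  set B := K ∩ Metric.closedBall 0 ((‖y‖ + 1) / c)
  have hB : IsClosed (f '' B) :=
    (((isCompact_closedBall 0 _).of_isClosed_subset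
      (hKc.inter Metric.isClosed_closedBall) inter_subset_right).image f.continuous).isClosed
  have hnear : Metric.ball y 1 ∩ f '' K ⊆ f '' B := by
    rintro _ ⟨hxy, x, hx, rfl⟩
    refine ⟨x, ⟨hx, ?_⟩, rfl⟩
    rw [Metric.mem_closedBall, dist_zero_right, le_div_iff₀ hc, mul_comm]
    have := norm_le_of_mem_closedBall (Metric.ball_subset_closedBall hxy)
    linarith [hcK x hx]
  have hy' : y ∈ closure (Metric.ball y 1 ∩ f '' K) :=
    Metric.isOpen_ball.inter_closure ⟨Metric.mem_ball_self one_pos, hy⟩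
  exact image_mono inter_subset_left (hB.closure_subset_iff.2 hnear hy')

theorem closure_image_inter_neg_closure_image {Ω : Set E} (hcone : IsCone Ω)
    (hne : Ω.Nonempty) (hconv : Convex ℝ Ω) (hproper : closure Ω ∩ -closure Ω = {0})
    (f : E →L[ℝ] F) (hf : ∀ x ∈ closure Ω, f x = 0 → x = 0) :
    closure (f '' Ω) ∩ -closure (f '' Ω) = {0} := by
  have hsub : closure (f '' Ω) ⊆ f '' closure Ω :=
    closure_minimal (image_mono subset_closure)
      (hcone.closure.isClosed_image isClosed_closure f hf)
  have h0 := (hcone.image f.toLinearMap).zero_mem_closure_s12 (hne.image f)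
  refine eq_singleton_iff_unique_mem.2 ⟨⟨h0, by simpa using h0⟩, ?_⟩
  rintro _ ⟨hx, hnx⟩
  obtain ⟨a, ha, rfl⟩ := hsub hx
  obtain ⟨b, hb, hab⟩ := hsub hnx
  have hsum : a + b = 0 :=
    hf _ (hcone.closure.add_mem hconv.closure ha hb) (by rw [map_add, hab, add_neg_cancel])
  have ha0 : a ∈ closure Ω ∩ -closure Ω :=
    ⟨ha, by rwa [Set.mem_neg, neg_eq_of_add_eq_zero_right hsum]⟩
  rw [hproper] at ha0
  rw [ha0, map_zero]

end Normed

end IsCone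

namespace Submodule

variable {𝕜 E : Type*} [RCLike 𝕜] [NormedAddCommGroup E] [InnerProductSpace 𝕜 E]
  (K : Submodule 𝕜 E) [K.HasOrthogonalProjection]

theorem starProjection_orthogonal_eq_zero_iff {v : E} : Kᗮ.starProjection v = 0 ↔ v ∈ K := by
  rw [starProjection_orthogonal_val, sub_eq_zero, eq_comm, starProjection_eq_self_iff]

theorem orthogonal_inter_add_eq_image_starProjection (S : Set E) :
    (Kᗮ : Set E) ∩ (S + K) = Kᗮ.starProjection '' S := by
  ext x
  constructor
  · rintro ⟨hx, s, hs, k, hk, rfl⟩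
    refine ⟨s, hs, ?_⟩
    rw [← starProjection_eq_self_iff.2 hx, map_add,
      K.starProjection_orthogonal_eq_zero_iff.2 hk, add_zero]
  · rintro ⟨s, hs, rfl⟩
    refine ⟨coe_mem _, s, hs, -K.starProjection s, neg_mem (coe_mem _), ?_⟩
    simp [sub_eq_add_neg]

end Submodule

theorem stmt_12_general {V : Type*} [NormedAddCommGroup V] [InnerProductSpace ℝ V]
    [FiniteDimensional ℝ V]
    (Ω : Set V) (hne : Ω.Nonempty) (hopen : IsOpen Ω) (hconv : Convex ℝ Ω)
    (hcone : IsCone Ω) (hproper : closure Ω ∩ -closure Ω = {0})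
    (H : Submodule ℝ V) (hH : (H : Set V) ∩ closure Ω = {0}) :
    ((Hᗮ : Set V) ∩ (Ω + (H : Set V))).Nonempty ∧
      IsOpen {x : Hᗮ | (x : V) ∈ Ω + (H : Set V)} ∧
      Convex ℝ ((Hᗮ : Set V) ∩ (Ω + (H : Set V))) ∧
      IsCone ((Hᗮ : Set V) ∩ (Ω + (H : Set V))) ∧
      closure ((Hᗮ : Set V) ∩ (Ω + (H : Set V))) ∩
        -closure ((Hᗮ : Set V) ∩ (Ω + (H : Set V))) = {0} := by
  have hker : ∀ x ∈ closure Ω, Hᗮ.starProjection x = 0 → x = 0 := fun x hx hPx =>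
    hH.subset ⟨H.starProjection_orthogonal_eq_zero_iff.1 hPx, hx⟩
  rw [H.orthogonal_inter_add_eq_image_starProjection]
  exact ⟨hne.image _, hopen.add_right.preimage continuous_subtype_val,
    hconv.linear_image Hᗮ.starProjection.toLinearMap, hcone.image Hᗮ.starProjection.toLinearMap,
    hcone.closure_image_inter_neg_closure_image hne hconv hproper _ hker⟩

theorem stmt_12 {V : Type*} [NormedAddCommGroup V] [InnerProductSpace ℝ V]
    [FiniteDimensional ℝ V]
    (Ω : Set V) (hne : Ω.Nonempty) (hopen : IsOpen Ω) (hconv : Convex ℝ Ω)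
    (hcone : IsCone Ω) (hproper : closure Ω ∩ -closure Ω = {0})
    (hhom : ∀ x ∈ Ω, ∀ y ∈ Ω, ∃ g : V ≃ₗ[ℝ] V, ⇑g '' Ω = Ω ∧ g x = y)
    (H : Submodule ℝ V) (hH : (H : Set V) ∩ closure Ω = {0}) :
    ((Hᗮ : Set V) ∩ (Ω + (H : Set V))).Nonempty ∧
      IsOpen {x : Hᗮ | (x : V) ∈ Ω + (H : Set V)} ∧
      Convex ℝ ((Hᗮ : Set V) ∩ (Ω + (H : Set V))) ∧
      IsCone ((Hᗮ : Set V) ∩ (Ω + (H : Set V))) ∧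
      closure ((Hᗮ : Set V) ∩ (Ω + (H : Set V))) ∩
        -closure ((Hᗮ : Set V) ∩ (Ω + (H : Set V))) = {0} :=
  stmt_12_general Ω hne hopen hconv hcone hproper H hH
end
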